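/- Let G = (V, E) be a connected proper interval graph with proper interval representation and edge interval ordering σ_E = (e_1, …, e_m), and let 1 ≤ i ≤ m. Let S ⊆ V satisfy: |N_G[e_a] ∩ S| ≥ 2 for every index a < i; |(N_G[e_a] ∪ N_G[e_b]) ∩ S| ≥ 3 for every index a < i and every edge e_b ≠ e_a with N_G[e_a] ∩ N_G[e_b] ≠ ∅; and |N_G[e_i] ∩ S| = 2. Let m' > i be an index such that |N_G[e_{m'}] ∩ S| < 2 and |N_G[e_p] ∩ S| ≥ 3 for every p with i < p < m', and set q = 2 − |N_G[e_{m'}] ∩ S|. If S is contained in some minimum liar's vertex-edge dominating set of G, then there exists a minimum liar's vertex-edge dominating set of G containing S ∪ T^q[N_G[e_{m'}] \ S]. -/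

import Mathlib

open SimpleGraph

variable {V : Type*}

/-- closed neighbourhood `N_G[v]` -/
def cN (G : SimpleGraph V) (v : V) : Set V := insert v {u | G.Adj v u}

/-- closed neighbourhood `N_G[e]` of an edge given as a `Sym2`. -/
def eN (G : SimpleGraph V) (e : Sym2 V) : Set V := {w | ∃ x ∈ e, w ∈ cN G x}

/-- closed neighbourhood `N_G[e]` of an edge given as an ordered pair `e = uv`. -/
def eNp (G : SimpleGraph V) (e : V × V) : Set V := cN G e.1 ∪ cN G e.2

/-- A liar's vertex-edge dominating set. -/
def IsLiarVE (G : SimpleGraph V) (L : Set V) : Prop :=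
  (∀ e ∈ G.edgeSet, 2 ≤ (eN G e ∩ L).ncard) ∧
  (∀ e ∈ G.edgeSet, ∀ f ∈ G.edgeSet, e ≠ f → 3 ≤ ((eN G e ∪ eN G f) ∩ L).ncard)

/-- A minimum liar's vertex-edge dominating set. -/
def IsMinLiar (G : SimpleGraph V) (L : Set V) : Prop :=
  IsLiarVE G L ∧ ∀ L' : Set V, IsLiarVE G L' → L.ncard ≤ L'.ncard

/-- A proper interval representation of a graph `G`: closed intervals `[l v, r v]`,
with all `2|V|` endpoints pairwise distinct, such that two distinct vertices are
adjacent iff their intervals intersect, and no interval contains another. -/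
structure PIRep {V : Type*} (G : SimpleGraph V) where
  l : V → ℝ
  r : V → ℝ
  lr : ∀ v, l v < r v
  distinct : Function.Injective (Sum.elim l r : V ⊕ V → ℝ)
  adj_iff : ∀ u v : V, u ≠ v → (G.Adj u v ↔ (l u ≤ r v ∧ l v ≤ r u))
  proper : ∀ u v : V, u ≠ v → ¬ (l u ≤ l v ∧ r v ≤ r u)

/-- The order `<_E` on edges, written as ordered pairs `e = uv` with `r u < r v`. -/
def ltE {G : SimpleGraph V} (ρ : PIRep G) (e f : V × V) : Prop :=
  ρ.r e.2 < ρ.r f.2 ∨ (e.2 = f.2 ∧ ρ.r e.1 < ρ.r f.1)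

/-- An edge interval ordering `σ_E = (e_1, …, e_m)` of all edges of `G`,
increasing with respect to `<_E`; each edge `e_i = (u_i, v_i)` with `r u_i < r v_i`. -/
structure EdgeOrder {V : Type*} {G : SimpleGraph V} (ρ : PIRep G) where
  m : ℕ
  seq : Fin m → V × V
  adj : ∀ i, G.Adj (seq i).1 (seq i).2
  ord : ∀ i, ρ.r (seq i).1 < ρ.r (seq i).2
  surj : ∀ u v : V, G.Adj u v → ρ.r u < ρ.r v → ∃ i, seq i = (u, v)
  mono : ∀ i j, i < j → ltE ρ (seq i) (seq j)

/-- `T^q[S]`: the `q` vertices of `S` whose intervals have the largest right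
endpoints (all of `S` if `|S| ≤ q`). -/
def Tq {G : SimpleGraph V} (ρ : PIRep G) (q : ℕ) (S : Set V) : Set V :=
  {v | v ∈ S ∧ ({u | u ∈ S ∧ ρ.r v < ρ.r u}).ncard < q}

/-!
Take a minimum liar's set `L ⊇ S` meeting `T = T^q[N[e_m'] \ S]` in as many vertices as possible,
and suppose some `t ∈ T` is missing from `L`. Since `|N[e_m'] ∩ L| ≥ 2`, `L` holds at least `q`
vertices of `N[e_m'] \ S`, so one of them, `d`, lies outside `T`, i.e. `r d < r t`. Exchanging
`d` for `t` keeps `L` a liar's set. For edges from `e_m'` on, every neighbourhood containing `d`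
contains `t`, since `l t ≤ r v_m'` and `r d < r t`. A constraint involving an edge before `e_m'`
is met with the help of the vertices of `S`; the delicate case is a pair `e_i, e_b` with `b ≥ m'`
and `t ∉ N[e_b]`: as `t ∈ T` forces `l v_m' ≤ r t`, the set `N[e_i] ∩ N[e_b]` lies in `N[e_m']`
and so holds at most one vertex of `S`. The exchanged set meets `T` in one more vertex, a contradiction.
-/

lemma mem_cN_iff {G : SimpleGraph V} {x w : V} : w ∈ cN G x ↔ w = x ∨ G.Adj x w :=
  Set.mem_insert_iff

lemma eN_mk (G : SimpleGraph V) (p : V × V) : eN G s(p.1, p.2) = eNp G p := by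
  ext w
  simp [eN, eNp]

section Counting

variable {α : Type*} [Finite α]

lemma Set.ncard_inter_le_ncard_inter_add_ncard_sdiff_inter (N S A : Set α) :
    (N ∩ A).ncard ≤ (N ∩ S).ncard + ((N \ S) ∩ A).ncard := by
  refine (Set.ncard_le_ncard fun w hw => ?_).trans (Set.ncard_union_le _ _)
  by_cases hwS : w ∈ S
  exacts [Or.inl ⟨hw.1, hwS⟩, Or.inr ⟨⟨hw.1, hwS⟩, hw.2⟩]

lemma Set.ncard_inter_le_ncard_inter_exchange {A L : Set α} {t d : α} (htL : t ∉ L)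
    (hdt : d ∈ A → t ∈ A) : (A ∩ L).ncard ≤ (A ∩ insert t (L \ {d})).ncard := by
  by_cases htA : t ∈ A
  · have hnot : t ∉ (A ∩ L) \ {d} := fun h => htL h.1.2
    calc (A ∩ L).ncard ≤ ((A ∩ L) \ {d}).ncard + 1 := by
          have := Set.pred_ncard_le_ncard_sdiff_singleton (A ∩ L) d
          omega
      _ = (insert t ((A ∩ L) \ {d})).ncard := (Set.ncard_insert_of_notMem hnot).symm
      _ ≤ (A ∩ insert t (L \ {d})).ncard := Set.ncard_le_ncard <| by
          rintro w (rfl | ⟨⟨hwA, hwL⟩, hwd⟩)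
          exacts [⟨htA, Set.mem_insert _ _⟩, ⟨hwA, Or.inr ⟨hwL, hwd⟩⟩]
  · refine Set.ncard_le_ncard fun w ⟨hwA, hwL⟩ => ⟨hwA, Or.inr ⟨hwL, ?_⟩⟩
    rintro rfl
    exact htA (hdt hwA)

lemma Set.three_le_ncard_union_inter {A B S L : Set α} (hSL : S ⊆ L)
    (hA : 2 ≤ (A ∩ S).ncard) (hB : 2 ≤ (B ∩ L).ncard) (hAB : (A ∩ B ∩ S).ncard ≤ 1) :
    3 ≤ ((A ∪ B) ∩ L).ncard := by
  have hunion : (A ∩ S) ∪ (B ∩ L) ⊆ (A ∪ B) ∩ L := by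
    rintro w (⟨hwA, hwS⟩ | ⟨hwB, hwL⟩)
    exacts [⟨Or.inl hwA, hSL hwS⟩, ⟨Or.inr hwB, hwL⟩]
  have hinter : (A ∩ S) ∩ (B ∩ L) ⊆ A ∩ B ∩ S := fun w hw => ⟨⟨hw.1.1, hw.2.1⟩, hw.1.2⟩
  have := Set.ncard_union_add_ncard_inter (A ∩ S) (B ∩ L)
  have := Set.ncard_le_ncard hunion
  have := Set.ncard_le_ncard hinter
  omega

end Counting

namespace PIRep

variable {G : SimpleGraph V} (ρ : PIRep G)

lemma r_injective : Function.Injective ρ.r := fun a b h =>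
  Sum.inr.inj (ρ.distinct (show Sum.elim ρ.l ρ.r (Sum.inr a) = Sum.elim ρ.l ρ.r (Sum.inr b) from h))

lemma mem_cN_iff_overlap {x w : V} : w ∈ cN G x ↔ ρ.l x ≤ ρ.r w ∧ ρ.l w ≤ ρ.r x := by
  rw [mem_cN_iff]
  by_cases hwx : w = x
  · subst hwx
    simp [(ρ.lr w).le]
  · rw [← ρ.adj_iff x w (Ne.symm hwx)]
    simp [hwx]

lemma overlap_of_adj {a b : V} (h : G.Adj a b) : ρ.l a ≤ ρ.r b ∧ ρ.l b ≤ ρ.r a :=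
  (ρ.adj_iff a b h.ne).mp h

lemma l_le_r_of_mem_eNp {a b w : V} (hab : ρ.r a < ρ.r b) (hw : w ∈ eNp G (a, b)) :
    ρ.l w ≤ ρ.r b := by
  rcases hw with hw | hw
  · exact ((ρ.mem_cN_iff_overlap).mp hw).2.trans hab.le
  · exact ((ρ.mem_cN_iff_overlap).mp hw).2

lemma mem_eNp_of_r_lt {a b d t : V} (hab : G.Adj a b) (hd : d ∈ eNp G (a, b))
    (hdt : ρ.r d < ρ.r t) (htb : ρ.l t ≤ ρ.r b) : t ∈ eNp G (a, b) := by
  simp only [eNp, Set.mem_union, ρ.mem_cN_iff_overlap] at hd ⊢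
  have := ρ.overlap_of_adj hab
  have := ρ.lr t
  by_cases hta : ρ.l t ≤ ρ.r a
  · rcases hd with hd | hd
    · exact Or.inl ⟨hd.1.trans hdt.le, hta⟩
    · exact Or.inr ⟨hd.1.trans hdt.le, htb⟩
  · exact Or.inr ⟨by linarith, htb⟩

end PIRep

namespace EdgeOrder

variable {G : SimpleGraph V} {ρ : PIRep G} (σ : EdgeOrder ρ)

lemma r_snd_monotone : Monotone fun k => ρ.r (σ.seq k).2 := by
  intro k k' hkk'
  rcases hkk'.eq_or_lt with rfl | hlt
  · exact le_rfl
  · rcases σ.mono k k' hlt with h | ⟨h, -⟩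
    exacts [h.le, (congrArg ρ.r h).le]

lemma seq_injective : Function.Injective σ.seq := by
  intro k k' h
  by_contra hne
  rcases lt_or_gt_of_ne hne with hlt | hlt
  all_goals
    rcases σ.mono _ _ hlt with h' | ⟨-, h'⟩
    all_goals simp only [h, lt_irrefl] at h'

lemma mk_seq_injective {k k' : Fin σ.m}
    (h : s((σ.seq k).1, (σ.seq k).2) = s((σ.seq k').1, (σ.seq k').2)) : k = k' := by
  rcases Sym2.mk_eq_mk_iff.mp h with h | h
  · exact σ.seq_injective h
  · have h1 := σ.ord k
    have h2 := σ.ord k'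
    rw [h] at h1
    exact absurd h1 (lt_asymm h2)

lemma exists_mk_eq {e : Sym2 V} (he : e ∈ G.edgeSet) :
    ∃ k, s((σ.seq k).1, (σ.seq k).2) = e := by
  induction e with
  | _ a b =>
    rcases lt_trichotomy (ρ.r a) (ρ.r b) with h | h | h
    · obtain ⟨k, hk⟩ := σ.surj a b he h
      exact ⟨k, by rw [hk]⟩
    · exact absurd (ρ.r_injective h) (G.ne_of_adj he)
    · obtain ⟨k, hk⟩ := σ.surj b a he.symm h
      exact ⟨k, by rw [hk, Sym2.eq_swap]⟩

lemma isLiarVE_iff {L : Set V} :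
    IsLiarVE G L ↔ (∀ k, 2 ≤ (eNp G (σ.seq k) ∩ L).ncard) ∧
      ∀ k l, k ≠ l → 3 ≤ ((eNp G (σ.seq k) ∪ eNp G (σ.seq l)) ∩ L).ncard := by
  constructor
  · rintro ⟨h2, h3⟩
    refine ⟨fun k => ?_, fun k l hkl => ?_⟩
    · simpa only [eN_mk] using h2 s((σ.seq k).1, (σ.seq k).2) (σ.adj k)
    · simpa only [eN_mk] using h3 s((σ.seq k).1, (σ.seq k).2) (σ.adj k)
        s((σ.seq l).1, (σ.seq l).2) (σ.adj l) (hkl ∘ σ.mk_seq_injective)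
  · rintro ⟨h2, h3⟩
    refine ⟨fun e he => ?_, fun e he f hf hef => ?_⟩
    · obtain ⟨k, rfl⟩ := σ.exists_mk_eq he
      simpa only [eN_mk] using h2 k
    · obtain ⟨k, rfl⟩ := σ.exists_mk_eq he
      obtain ⟨l, rfl⟩ := σ.exists_mk_eq hf
      simpa only [eN_mk] using h3 k l (by rintro rfl; exact hef rfl)

lemma l_le_r_snd {k : Fin σ.m} {w : V} (hw : w ∈ eNp G (σ.seq k)) : ρ.l w ≤ ρ.r (σ.seq k).2 :=
  ρ.l_le_r_of_mem_eNp (σ.ord k) hw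

lemma mem_eNp_of_le {k k' : Fin σ.m} {t w : V} (hkk' : k ≤ k') (ht : t ∈ eNp G (σ.seq k))
    (hw : w ∈ eNp G (σ.seq k')) (hwt : ρ.r w < ρ.r t) : t ∈ eNp G (σ.seq k') :=
  ρ.mem_eNp_of_r_lt (σ.adj k') hw hwt ((σ.l_le_r_snd ht).trans (σ.r_snd_monotone hkk'))

lemma eNp_inter_subset {i k k' : Fin σ.m} {t : V} (hik : i ≤ k) (hkk' : k ≤ k')
    (ht : t ∈ eNp G (σ.seq k)) (hvt : ρ.l (σ.seq k).2 ≤ ρ.r t) (htk' : t ∉ eNp G (σ.seq k')) :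
    eNp G (σ.seq i) ∩ eNp G (σ.seq k') ⊆ eNp G (σ.seq k) := by
  rintro z ⟨hzi, hzk'⟩
  have htz : ρ.r t ≤ ρ.r z := not_lt.mp fun hzt => htk' (σ.mem_eNp_of_le hkk' ht hzk' hzt)
  refine Or.inr ((ρ.mem_cN_iff_overlap).mpr ⟨hvt.trans htz, ?_⟩)
  exact (σ.l_le_r_snd hzi).trans (σ.r_snd_monotone hik)

end EdgeOrder

section Tq

variable [Finite V] {G : SimpleGraph V} (ρ : PIRep G) {q : ℕ} {X : Set V}

lemma mem_Tq_of_le {v w : V} (hv : v ∈ Tq ρ q X) (hw : w ∈ X) (hvw : ρ.r v ≤ ρ.r w) :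
    w ∈ Tq ρ q X :=
  ⟨hw, lt_of_le_of_lt (Set.ncard_le_ncard (t := {u | u ∈ X ∧ ρ.r v < ρ.r u})
    fun _ hu => ⟨hu.1, hvw.trans_lt hu.2⟩) hv.2⟩

lemma ncard_Tq_le : (Tq ρ q X).ncard ≤ q := by
  by_contra! hq
  have hne : (Tq ρ q X).Nonempty := Set.nonempty_of_ncard_ne_zero (by omega)
  obtain ⟨v, hv, hvmin⟩ := Set.exists_min_image _ ρ.r (Set.toFinite _) hne
  have hsub : Tq ρ q X \ {v} ⊆ {u | u ∈ X ∧ ρ.r v < ρ.r u} := fun u ⟨huT, huv⟩ =>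
    ⟨huT.1, (hvmin u huT).lt_of_ne fun h => huv (ρ.r_injective h).symm⟩
  have := Set.ncard_le_ncard hsub
  rw [Set.ncard_sdiff_singleton_of_mem hv] at this
  have := hv.2
  omega

lemma exists_mem_inter_notMem_Tq {L : Set V} {t : V} (hq : q ≤ (X ∩ L).ncard)
    (ht : t ∈ Tq ρ q X) (htL : t ∉ L) : ∃ d ∈ X ∩ L, d ∉ Tq ρ q X := by
  by_contra! h
  have hsub : X ∩ L ⊆ Tq ρ q X \ {t} := fun d hd => ⟨h d hd, fun hdt => htL (hdt ▸ hd.2)⟩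
  have := Set.ncard_le_ncard hsub
  rw [Set.ncard_sdiff_singleton_of_mem ht] at this
  have := ncard_Tq_le ρ (q := q) (X := X)
  have := (Set.ncard_pos (Set.toFinite _)).mpr ⟨t, ht⟩
  omega

end Tq

section Exchange

variable [Finite V] {G : SimpleGraph V} {ρ : PIRep G} (σ : EdgeOrder ρ)
  {i mi : Fin σ.m} {S L L' : Set V} {t d : V}

lemma EdgeOrder.l_snd_le_r_of_mem_Tq {k : Fin σ.m} {q : ℕ}
    (hq : q ≤ 2 - (eNp G (σ.seq k) ∩ S).ncard) (ht : t ∈ Tq ρ q (eNp G (σ.seq k) \ S)) :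
    ρ.l (σ.seq k).2 ≤ ρ.r t := by
  by_contra! hvt
  -- otherwise both ends `u`, `v` of the edge end right of `t`, and at most `2 - q` lie in `S`
  set N := eNp G (σ.seq k)
  have hu : ρ.r t < ρ.r (σ.seq k).1 := hvt.trans_le (ρ.overlap_of_adj (σ.adj k)).2
  have hpair : {(σ.seq k).1, (σ.seq k).2} ⊆ N ∩ {w | ρ.r t < ρ.r w} := by
    rintro w (rfl | rfl)
    · exact ⟨Or.inl (Set.mem_insert _ _), hu⟩
    · exact ⟨Or.inr (Set.mem_insert _ _), hu.trans (σ.ord k)⟩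
  have := Set.ncard_le_ncard hpair
  rw [Set.ncard_pair (σ.adj k).ne] at this
  have := Set.ncard_inter_le_ncard_inter_add_ncard_sdiff_inter N S {w | ρ.r t < ρ.r w}
  have : ((N \ S) ∩ {w | ρ.r t < ρ.r w}).ncard < q := ht.2
  omega

lemma EdgeOrder.two_le_ncard_eNp_inter_of_exchange
    (hprev2 : ∀ a : Fin σ.m, a < i → 2 ≤ (eNp G (σ.seq a) ∩ S).ncard)
    (h2 : (eNp G (σ.seq i) ∩ S).ncard = 2)
    (hmid : ∀ p : Fin σ.m, i < p → p < mi → 3 ≤ (eNp G (σ.seq p) ∩ S).ncard)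
    (hL : ∀ k, 2 ≤ (eNp G (σ.seq k) ∩ L).ncard) (hSL' : S ⊆ L')
    (hexch : ∀ A : Set V, (d ∈ A → t ∈ A) → (A ∩ L).ncard ≤ (A ∩ L').ncard)
    (ht : t ∈ eNp G (σ.seq mi)) (hdt : ρ.r d < ρ.r t) (k : Fin σ.m) :
    2 ≤ (eNp G (σ.seq k) ∩ L').ncard := by
  rcases lt_or_ge k mi with hkm | hmk
  · refine le_trans ?_ (Set.ncard_le_ncard (Set.inter_subset_inter_right _ hSL'))
    rcases lt_trichotomy k i with hki | rfl | hik
    exacts [hprev2 k hki, h2.ge, (hmid k hik hkm).trans' (by norm_num)]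
  · exact (hL k).trans (hexch _ fun hd => σ.mem_eNp_of_le hmk ht hd hdt)

lemma EdgeOrder.three_le_ncard_eNp_union_inter_of_exchange
    (hprev2 : ∀ a : Fin σ.m, a < i → 2 ≤ (eNp G (σ.seq a) ∩ S).ncard)
    (hprev3 : ∀ a : Fin σ.m, a < i → ∀ b : Fin σ.m, σ.seq b ≠ σ.seq a →
      (eNp G (σ.seq a) ∩ eNp G (σ.seq b)).Nonempty →
      3 ≤ ((eNp G (σ.seq a) ∪ eNp G (σ.seq b)) ∩ S).ncard)
    (h2 : (eNp G (σ.seq i) ∩ S).ncard = 2) (him : i < mi)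
    (hlt : (eNp G (σ.seq mi) ∩ S).ncard < 2)
    (hmid : ∀ p : Fin σ.m, i < p → p < mi → 3 ≤ (eNp G (σ.seq p) ∩ S).ncard)
    (hL : ∀ k l, k ≠ l → 3 ≤ ((eNp G (σ.seq k) ∪ eNp G (σ.seq l)) ∩ L).ncard)
    (hL' : ∀ k, 2 ≤ (eNp G (σ.seq k) ∩ L').ncard) (hSL' : S ⊆ L')
    (hexch : ∀ A : Set V, (d ∈ A → t ∈ A) → (A ∩ L).ncard ≤ (A ∩ L').ncard)
    (ht : t ∈ eNp G (σ.seq mi)) (hvt : ρ.l (σ.seq mi).2 ≤ ρ.r t) (hdt : ρ.r d < ρ.r t)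
    {k l : Fin σ.m} (hkl : k ≠ l) :
    3 ≤ ((eNp G (σ.seq k) ∪ eNp G (σ.seq l)) ∩ L').ncard := by
  wlog hlt' : k < l generalizing k l
  · rw [Set.union_comm]
    exact this hkl.symm (lt_of_le_of_ne (not_lt.mp hlt') hkl.symm)
  have of_S (a b : Fin σ.m) (h : 3 ≤ (eNp G (σ.seq a) ∩ S).ncard) :
      3 ≤ ((eNp G (σ.seq a) ∪ eNp G (σ.seq b)) ∩ L').ncard :=
    h.trans (Set.ncard_le_ncard (Set.inter_subset_inter Set.subset_union_left hSL'))
  rcases lt_trichotomy k i with hki | rfl | hik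
  · by_cases hmeet : (eNp G (σ.seq k) ∩ eNp G (σ.seq l)).Nonempty
    · exact (hprev3 k hki l (σ.seq_injective.ne hkl.symm) hmeet).trans
        (Set.ncard_le_ncard (Set.inter_subset_inter_right _ hSL'))
    · refine Set.three_le_ncard_union_inter hSL' (hprev2 k hki) (hL' l) ?_
      simp [Set.not_nonempty_iff_eq_empty.mp hmeet]
  · rcases lt_or_ge l mi with hlm | hml
    · rw [Set.union_comm]
      exact of_S l k (hmid l hlt' hlm)
    by_cases htl : t ∈ eNp G (σ.seq l)
    · exact (hL k l hkl).trans (hexch _ fun _ => Or.inr htl)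
    refine Set.three_le_ncard_union_inter hSL' h2.ge (hL' l) ?_
    have := Set.ncard_le_ncard
      (Set.inter_subset_inter_left S (σ.eNp_inter_subset him.le hml ht hvt htl))
    omega
  · rcases lt_or_ge k mi with hkm | hmk
    · exact of_S k l (hmid k hik hkm)
    refine (hL k l hkl).trans (hexch _ ?_)
    rintro (hd | hd)
    exacts [Or.inl (σ.mem_eNp_of_le hmk ht hd hdt),
      Or.inr (σ.mem_eNp_of_le (hmk.trans hlt'.le) ht hd hdt)]

lemma EdgeOrder.isLiarVE_exchange
    (hprev2 : ∀ a : Fin σ.m, a < i → 2 ≤ (eNp G (σ.seq a) ∩ S).ncard)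
    (hprev3 : ∀ a : Fin σ.m, a < i → ∀ b : Fin σ.m, σ.seq b ≠ σ.seq a →
      (eNp G (σ.seq a) ∩ eNp G (σ.seq b)).Nonempty →
      3 ≤ ((eNp G (σ.seq a) ∪ eNp G (σ.seq b)) ∩ S).ncard)
    (h2 : (eNp G (σ.seq i) ∩ S).ncard = 2) (him : i < mi)
    (hlt : (eNp G (σ.seq mi) ∩ S).ncard < 2)
    (hmid : ∀ p : Fin σ.m, i < p → p < mi → 3 ≤ (eNp G (σ.seq p) ∩ S).ncard)
    (hL : IsLiarVE G L) (hSL' : S ⊆ insert t (L \ {d})) (htL : t ∉ L)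
    (ht : t ∈ eNp G (σ.seq mi)) (hvt : ρ.l (σ.seq mi).2 ≤ ρ.r t) (hdt : ρ.r d < ρ.r t) :
    IsLiarVE G (insert t (L \ {d})) := by
  have hexch (A : Set V) (hA : d ∈ A → t ∈ A) :=
    Set.ncard_inter_le_ncard_inter_exchange (L := L) htL hA
  obtain ⟨hL2, hL3⟩ := σ.isLiarVE_iff.mp hL
  have hL'2 := σ.two_le_ncard_eNp_inter_of_exchange hprev2 h2 hmid hL2 hSL' hexch ht hdt
  exact σ.isLiarVE_iff.mpr ⟨hL'2, fun k l hkl =>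
    σ.three_le_ncard_eNp_union_inter_of_exchange hprev2 hprev3 h2 him hlt hmid hL3 hL'2 hSL'
      hexch ht hvt hdt hkl⟩

end Exchange

theorem stmt_17_general
    {V : Type*} [Fintype V]
    (G : SimpleGraph V) (ρ : PIRep G) (σ : EdgeOrder ρ)
    (i : Fin σ.m) (S : Set V)
    (hprev2 : ∀ a : Fin σ.m, a < i → 2 ≤ (eNp G (σ.seq a) ∩ S).ncard)
    (hprev3 : ∀ a : Fin σ.m, a < i → ∀ b : Fin σ.m, σ.seq b ≠ σ.seq a →
      (eNp G (σ.seq a) ∩ eNp G (σ.seq b)).Nonempty →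
      3 ≤ ((eNp G (σ.seq a) ∪ eNp G (σ.seq b)) ∩ S).ncard)
    (h2 : (eNp G (σ.seq i) ∩ S).ncard = 2)
    (mi : Fin σ.m) (him : i < mi)
    (hlt : (eNp G (σ.seq mi) ∩ S).ncard < 2)
    (hmid : ∀ p : Fin σ.m, i < p → p < mi → 3 ≤ (eNp G (σ.seq p) ∩ S).ncard)
    (q : ℕ) (hq : q = 2 - (eNp G (σ.seq mi) ∩ S).ncard)
    (hcont : ∃ L : Set V, IsMinLiar G L ∧ S ⊆ L) :
    ∃ L' : Set V, IsMinLiar G L' ∧ S ∪ Tq ρ q (eNp G (σ.seq mi) \ S) ⊆ L' := by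
  set N := eNp G (σ.seq mi)
  set T := Tq ρ q (N \ S)
  obtain ⟨L, ⟨hLmin, hSL⟩, hmax⟩ := Set.exists_max_image {L : Set V | IsMinLiar G L ∧ S ⊆ L}
    (fun L => (L ∩ T).ncard) (Set.toFinite _) hcont
  refine ⟨L, hLmin, Set.union_subset hSL fun t ht => ?_⟩
  by_contra htL
  have hqL : q ≤ ((N \ S) ∩ L).ncard := by
    have h2L : 2 ≤ (N ∩ L).ncard := (σ.isLiarVE_iff.mp hLmin.1).1 mi
    have := Set.ncard_inter_le_ncard_inter_add_ncard_sdiff_inter N S L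
    omega
  obtain ⟨d, ⟨hdX, hdL⟩, hdT⟩ := exists_mem_inter_notMem_Tq ρ hqL ht htL
  have hdt : ρ.r d < ρ.r t := lt_of_not_ge fun h => hdT (mem_Tq_of_le ρ ht hdX h)
  have hSL' : S ⊆ insert t (L \ {d}) := fun w hw => Or.inr ⟨hSL hw, fun h => hdX.2 (h ▸ hw)⟩
  have hL' : IsMinLiar G (insert t (L \ {d})) :=
    ⟨σ.isLiarVE_exchange hprev2 hprev3 h2 him hlt hmid hLmin.1 hSL' htL ht.1.1
        (σ.l_snd_le_r_of_mem_Tq hq.le ht) hdt,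
      fun L'' h => (Set.ncard_exchange htL hdL).symm ▸ hLmin.2 L'' h⟩
  have hmore := hmax _ ⟨hL', hSL'⟩
  have hT : insert t (L \ {d}) ∩ T = insert t (L ∩ T) := by
    rw [Set.insert_inter_of_mem ht, Set.sdiff_inter_right_comm,
      Set.sdiff_singleton_eq_self fun h => hdT h.2]
  rw [hT, Set.ncard_insert_of_notMem (fun h => htL h.1)] at hmore
  omega

theorem stmt_17
    {V : Type*} [Fintype V]
    (G : SimpleGraph V) (hconn : G.Connected) (ρ : PIRep G) (σ : EdgeOrder ρ)
    (i : Fin σ.m) (S : Set V)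
    (hprev2 : ∀ a : Fin σ.m, a < i → 2 ≤ (eNp G (σ.seq a) ∩ S).ncard)
    (hprev3 : ∀ a : Fin σ.m, a < i → ∀ b : Fin σ.m, σ.seq b ≠ σ.seq a →
      (eNp G (σ.seq a) ∩ eNp G (σ.seq b)).Nonempty →
      3 ≤ ((eNp G (σ.seq a) ∪ eNp G (σ.seq b)) ∩ S).ncard)
    (h2 : (eNp G (σ.seq i) ∩ S).ncard = 2)
    (mi : Fin σ.m) (him : i < mi)
    (hlt : (eNp G (σ.seq mi) ∩ S).ncard < 2)
    (hmid : ∀ p : Fin σ.m, i < p → p < mi → 3 ≤ (eNp G (σ.seq p) ∩ S).ncard)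
    (q : ℕ) (hq : q = 2 - (eNp G (σ.seq mi) ∩ S).ncard)
    (hcont : ∃ L : Set V, IsMinLiar G L ∧ S ⊆ L) :
    ∃ L' : Set V, IsMinLiar G L' ∧ S ∪ Tq ρ q (eNp G (σ.seq mi) \ S) ⊆ L' :=
  stmt_17_general G ρ σ i S hprev2 hprev3 h2 mi him hlt hmid q hq hcont
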